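/- arXiv:2012.06783 — 2 statements merged into one kernel-verified Lean document; each statement's English description precedes it below -/
import Mathlib

section
/- Let X and Y be real Banach spaces, let T : Y → X be a bounded linear operator that is not compact, and suppose X has a Schauder basis (e_n)_{n∈ℕ}. Then there exist a semi-normalized block basic sequence (u_j)_{j∈ℕ} in X with respect to (e_n) and a bounded semi-normalized sequence (v_j)_{j∈ℕ} in Y such that (u_j) is equivalent to (T v_j). -/
open scoped BigOperators

/-- `e` is a Schauder basis of `X`: every vector has a unique expansion as a norm-convergent
series `∑ n, a n • e n` (partial sums over `Finset.range N`). -/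
def IsSchauderBasis {X : Type*} [NormedAddCommGroup X] [NormedSpace ℝ X] (e : ℕ → X) : Prop :=
  ∀ x : X, ∃! a : ℕ → ℝ,
    Filter.Tendsto (fun N => ∑ n ∈ Finset.range N, a n • e n) Filter.atTop (nhds x)

/-- `u` is a block basic sequence with respect to `e`. -/
def IsBlockBasic {X : Type*} [NormedAddCommGroup X] [NormedSpace ℝ X]
    (e : ℕ → X) (u : ℕ → X) : Prop :=
  ∃ (A : ℕ → Finset ℕ) (a : ℕ → ℝ),
    (∀ j, (A j).Nonempty) ∧
    (∀ j, ∀ m ∈ A j, ∀ k ∈ A (j + 1), m < k) ∧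
    (∀ j, u j = ∑ n ∈ A j, a n • e n)

/-- A sequence is semi-normalized if its norms are bounded away from zero and from infinity. -/
def SemiNormalized {X : Type*} [NormedAddCommGroup X] (u : ℕ → X) : Prop :=
  ∃ c C : ℝ, 0 < c ∧ ∀ j, c ≤ ‖u j‖ ∧ ‖u j‖ ≤ C

/-- Two sequences (possibly in different spaces) are equivalent. -/
def SeqEquiv {X Y : Type*} [NormedAddCommGroup X] [NormedSpace ℝ X]
    [NormedAddCommGroup Y] [NormedSpace ℝ Y] (u : ℕ → X) (w : ℕ → Y) : Prop :=
  ∃ C : ℝ, 1 ≤ C ∧ ∀ (a : ℕ → ℝ) (s : Finset ℕ),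
    C⁻¹ * ‖∑ j ∈ s, a j • w j‖ ≤ ‖∑ j ∈ s, a j • u j‖ ∧
    ‖∑ j ∈ s, a j • u j‖ ≤ C * ‖∑ j ∈ s, a j • w j‖

/-- A bounded linear operator is compact if the image of the closed unit ball is
relatively compact. -/
def CompactOp {X Y : Type*} [NormedAddCommGroup X] [NormedSpace ℝ X]
    [NormedAddCommGroup Y] [NormedSpace ℝ Y] (T : Y →L[ℝ] X) : Prop :=
  IsCompact (closure (T '' Metric.closedBall 0 1))

/-- `e` is an unconditional basis of `X`. -/
def IsUncondBasis {X : Type*} [NormedAddCommGroup X] [NormedSpace ℝ X] (e : ℕ → X) : Prop :=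
  (∀ n, e n ≠ 0) ∧ ∀ x : X, ∃! a : ℕ → ℝ, HasSum (fun n => a n • e n) x

/-- `u` is disjointly finitely supported with respect to `e`. -/
def DisjSupported {X : Type*} [NormedAddCommGroup X] [NormedSpace ℝ X]
    (e : ℕ → X) (u : ℕ → X) : Prop :=
  ∃ A : ℕ → Finset ℕ, Pairwise (Function.onFun Disjoint A) ∧
    ∀ j, u j ∈ Submodule.span ℝ (e '' (A j : Set ℕ))

/-- The basis `e` satisfies a lower `q`-estimate. -/
def LowerEstimate {X : Type*} [NormedAddCommGroup X] [NormedSpace ℝ X]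
    (e : ℕ → X) (q : ℝ) : Prop :=
  ∃ C : ℝ, 0 < C ∧ ∀ (m : ℕ) (f : Fin m → X) (A : Fin m → Finset ℕ),
    Pairwise (Function.onFun Disjoint A) →
    (∀ i, f i ∈ Submodule.span ℝ (e '' (A i : Set ℕ))) →
    (∑ i, ‖f i‖ ^ q) ^ (1 / q) ≤ C * ‖∑ i, f i‖

/-- The basis `e` satisfies an upper `q`-estimate. -/
def UpperEstimate {X : Type*} [NormedAddCommGroup X] [NormedSpace ℝ X]
    (e : ℕ → X) (q : ℝ) : Prop :=
  ∃ C : ℝ, 0 < C ∧ ∀ (m : ℕ) (f : Fin m → X) (A : Fin m → Finset ℕ),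
    Pairwise (Function.onFun Disjoint A) →
    (∀ i, f i ∈ Submodule.span ℝ (e '' (A i : Set ℕ))) →
    ‖∑ i, f i‖ ≤ C * (∑ i, ‖f i‖ ^ q) ^ (1 / q)

/-- `u` is equivalent to the canonical basis of `ℓ_q`. -/
def EquivCanonLq {X : Type*} [NormedAddCommGroup X] [NormedSpace ℝ X]
    (u : ℕ → X) (q : ℝ) : Prop :=
  ∃ C : ℝ, 1 ≤ C ∧ ∀ (a : ℕ → ℝ) (s : Finset ℕ),
    C⁻¹ * (∑ j ∈ s, |a j| ^ q) ^ (1 / q) ≤ ‖∑ j ∈ s, a j • u j‖ ∧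
    ‖∑ j ∈ s, a j • u j‖ ≤ C * (∑ j ∈ s, |a j| ^ q) ^ (1 / q)

/-- `Z` contains an isomorphic copy of `ℓ_q`: there is a bounded linear map `J : ℓ_q → Z`
which is bounded below. -/
def ContainsLp (Z : Type*) [NormedAddCommGroup Z] [NormedSpace ℝ Z] (q : ℝ) : Prop :=
  ∃ (J : lp (fun _ : ℕ => ℝ) (ENNReal.ofReal q) →ₗ[ℝ] Z) (C c : ℝ), 0 < c ∧
    ∀ f, ‖J f‖ ≤ C * ‖f‖ ∧ c * ‖f‖ ≤ ‖J f‖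

/-- `T` is strictly singular: it is bounded below on no infinite-dimensional subspace. -/
def StrictlySingular {X Y : Type*} [NormedAddCommGroup X] [NormedSpace ℝ X]
    [NormedAddCommGroup Y] [NormedSpace ℝ Y] (T : Y →L[ℝ] X) : Prop :=
  ∀ (Z : Submodule ℝ Y) (c : ℝ), 0 < c → (∀ z ∈ Z, c * ‖z‖ ≤ ‖T z‖) →
    FiniteDimensional ℝ Z

/-- A finite family of Banach spaces is splitting for unconditional bases. -/
def SplittingFamily {ι : Type*} [Fintype ι] (Z : ι → Type*)
    [∀ i, NormedAddCommGroup (Z i)] [∀ i, NormedSpace ℝ (Z i)] : Prop :=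
  ∀ w : ℕ → (∀ i, Z i), IsUncondBasis w →
    ∃ N : ι → Set ℕ, Pairwise (Function.onFun Disjoint N) ∧ (⋃ i, N i) = Set.univ ∧
      ∀ i, Nonempty ((Submodule.span ℝ (w '' N i)).topologicalClosure ≃L[ℝ] Z i)

/-- A pair of Banach spaces is splitting for unconditional bases. -/
def SplittingPair (U V : Type*) [NormedAddCommGroup U] [NormedSpace ℝ U]
    [NormedAddCommGroup V] [NormedSpace ℝ V] : Prop :=
  ∀ w : ℕ → U × V, IsUncondBasis w →
    ∃ N₁ N₂ : Set ℕ, Disjoint N₁ N₂ ∧ N₁ ∪ N₂ = Set.univ ∧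
      Nonempty ((Submodule.span ℝ (w '' N₁)).topologicalClosure ≃L[ℝ] U) ∧
      Nonempty ((Submodule.span ℝ (w '' N₂)).topologicalClosure ≃L[ℝ] V)

/-- `U` has a unique, up to equivalence and permutation, unconditional basis. -/
def HasUTAPBasis (U : Type*) [NormedAddCommGroup U] [NormedSpace ℝ U] : Prop :=
  ∃ e : ℕ → U, IsUncondBasis e ∧ SemiNormalized e ∧
    ∀ f : ℕ → U, IsUncondBasis f → SemiNormalized f →
      ∃ π : Equiv.Perm ℕ, SeqEquiv (fun n => f (π n)) e

/-- `y` is a subsymmetric basic sequence: semi-normalized, an unconditional basis of its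
closed linear span, and equivalent to all of its subsequences. -/
def IsSubsymmetric {X : Type*} [NormedAddCommGroup X] [NormedSpace ℝ X] (y : ℕ → X) : Prop :=
  SemiNormalized y ∧ (∀ n, y n ≠ 0) ∧
  (∀ x : X, x ∈ (Submodule.span ℝ (Set.range y)).topologicalClosure →
    ∃! a : ℕ → ℝ, HasSum (fun n => a n • y n) x) ∧
  ∀ k : ℕ → ℕ, StrictMono k → SeqEquiv (fun n => y (k n)) y

/-!
By the open mapping theorem, the partial-sum projections `P N` of a Schauder basis of a Banach
space are uniformly bounded, say by `C`. Since `T` is not compact, it maps the unit ball onto a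
set that is not totally bounded, which yields `v k` in the unit ball with the `T (v k)` pairwise
`ε`-apart. As `P N` has finite rank, two of the `P N (T (v k))` are close; the difference `w` of
the corresponding `v k` has `ε ≤ ‖T w‖` while `T w` is concentrated, up to a small error, on
coordinates in `[N, N')` for some `N' > N`. Iterating this gliding hump gives blocks
`u j = (P (N (j + 1)) - P (N j)) (T (w j))` with `∑ ‖u j - T (w j)‖` small compared with `ε / C`.
Because the block projections are mutually orthogonal, `|a j| ‖u j‖ ≤ 2 C ‖∑ a i • u i‖`, and the
principle of small perturbations makes `(u j)` equivalent to `(T (w j))`.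
-/

open Filter Topology
open scoped OnePoint

@[simp]
theorem OnePoint.continuousMapMkNat_apply_coe {Y : Type*} [TopologicalSpace Y] (f : ℕ → Y) (y : Y)
    (h : Tendsto f atTop (𝓝 y)) (n : ℕ) : OnePoint.continuousMapMkNat f y h n = f n :=
  rfl

namespace IsSchauderBasis

variable {X : Type*} [NormedAddCommGroup X] [NormedSpace ℝ X] {e : ℕ → X}

noncomputable def coeff (he : IsSchauderBasis e) : X →ₗ[ℝ] ℕ → ℝ where
  toFun x := (he x).exists.choose
  map_add' x y := (he (x + y)).unique (he (x + y)).exists.choose_spec <| by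
    simpa [add_smul, Finset.sum_add_distrib] using
      (he x).exists.choose_spec.add (he y).exists.choose_spec
  map_smul' c x := (he (c • x)).unique (he (c • x)).exists.choose_spec <| by
    simpa [Finset.smul_sum, smul_smul] using (he x).exists.choose_spec.const_smul c

theorem tendsto_coeff (he : IsSchauderBasis e) (x : X) :
    Tendsto (fun N => ∑ n ∈ Finset.range N, he.coeff x n • e n) atTop (𝓝 x) :=
  (he x).exists.choose_spec

theorem coeff_eq (he : IsSchauderBasis e) {x : X} {a : ℕ → ℝ}
    (ha : Tendsto (fun N => ∑ n ∈ Finset.range N, a n • e n) atTop (𝓝 x)) : he.coeff x = a :=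
  (he x).unique (he.tendsto_coeff x) ha

theorem coeff_basis (he : IsSchauderBasis e) (j : ℕ) : he.coeff (e j) = Pi.single j 1 := by
  refine he.coeff_eq (tendsto_atTop_of_eventually_const (i₀ := j + 1) fun N hN => ?_)
  rw [Finset.sum_eq_single_of_mem j (by simp; omega) fun n _ hn => by simp [hn]]
  simp

theorem ne_zero (he : IsSchauderBasis e) (n : ℕ) : e n ≠ 0 := by
  intro h
  have := congr_fun (he.coeff_basis n) n
  simp [h] at this

/-- Convergent sequences of partial sums of `e`-expansions, as continuous functions on the
one-point compactification of `ℕ` (the value at `∞` being the sum). -/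
def partialSumSpace (e : ℕ → X) : Submodule ℝ C(OnePoint ℕ, X) where
  carrier := {f | f (0 : ℕ) = 0 ∧ ∀ N : ℕ, f (N + 1 : ℕ) - f N ∈ Submodule.span ℝ {e N}}
  zero_mem' := by simp
  add_mem' := by
    rintro f g ⟨hf0, hf⟩ ⟨hg0, hg⟩
    refine ⟨by simp [hf0, hg0], fun N => ?_⟩
    simpa [add_sub_add_comm] using add_mem (hf N) (hg N)
  smul_mem' := by
    rintro c f ⟨hf0, hf⟩
    exact ⟨by simp [hf0], fun N => by simpa [← smul_sub] using Submodule.smul_mem _ c (hf N)⟩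

theorem isClosed_partialSumSpace (e : ℕ → X) :
    IsClosed (partialSumSpace e : Set C(OnePoint ℕ, X)) := by
  have hspan (N : ℕ) : IsClosed (Submodule.span ℝ {e N} : Set X) :=
    Submodule.closed_of_finiteDimensional _
  change IsClosed {f : C(OnePoint ℕ, X) | _ ∧ _}
  rw [Set.ofPred_and, Set.ofPred_forall]
  refine (isClosed_singleton.preimage (continuous_eval_const _)).inter
    (isClosed_iInter fun N => (hspan N).preimage ?_)
  exact (continuous_eval_const _).sub (continuous_eval_const _)

theorem partialSum_mem_partialSumSpace {a : ℕ → ℝ} {x : X}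
    (ha : Tendsto (fun N => ∑ n ∈ Finset.range N, a n • e n) atTop (𝓝 x)) :
    OnePoint.continuousMapMkNat _ x ha ∈ partialSumSpace e :=
  ⟨by simp, fun N => Submodule.mem_span_singleton.2 ⟨a N, by simp [Finset.sum_range_succ]⟩⟩

noncomputable def sumCLM (e : ℕ → X) : partialSumSpace e →L[ℝ] X :=
  (ContinuousMap.evalCLM ℝ ∞).comp (partialSumSpace e).subtypeL

theorem sumCLM_injective (he : IsSchauderBasis e) : Function.Injective (sumCLM e) := by
  refine (injective_iff_map_eq_zero _).2 fun ⟨f, hf0, hf⟩ hsum => ?_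
  replace hsum : f ∞ = 0 := hsum
  choose c hc using fun N => Submodule.mem_span_singleton.1 (hf N)
  have hpartial (N : ℕ) : f N = ∑ n ∈ Finset.range N, c n • e n := by
    induction N with
    | zero => simpa using hf0
    | succ N ih => rw [Finset.sum_range_succ, ← ih, hc N, add_sub_cancel]
  have hlim : Tendsto (fun N => ∑ n ∈ Finset.range N, c n • e n) atTop (𝓝 0) := by
    simpa [← hpartial, hsum] using (OnePoint.continuous_iff_from_nat f).1 f.continuous
  have hc0 : c = 0 := by rw [← he.coeff_eq hlim, map_zero]
  ext x : 2
  induction x using OnePoint.rec with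
  | infty => exact hsum
  | coe N => simp [hpartial, hc0]

theorem sumCLM_surjective (he : IsSchauderBasis e) : Function.Surjective (sumCLM e) :=
  fun x => ⟨⟨_, partialSum_mem_partialSumSpace (he.tendsto_coeff x)⟩, rfl⟩

theorem exists_norm_partialSum_le [CompleteSpace X] (he : IsSchauderBasis e) :
    ∃ C, ∀ x N, ‖∑ n ∈ Finset.range N, he.coeff x n • e n‖ ≤ C * ‖x‖ := by
  have := (isClosed_partialSumSpace e).completeSpace_coe
  let L := ContinuousLinearEquiv.ofBijective (sumCLM e)
    (LinearMap.ker_eq_bot.2 (sumCLM_injective he))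
    (LinearMap.range_eq_top.2 (sumCLM_surjective he))
  refine ⟨‖(L.symm : X →L[ℝ] partialSumSpace e)‖, fun x N => ?_⟩
  have hL : L.symm x = ⟨_, partialSum_mem_partialSumSpace (he.tendsto_coeff x)⟩ :=
    L.symm_apply_eq.2 rfl
  calc ‖∑ n ∈ Finset.range N, he.coeff x n • e n‖ = ‖(L.symm x : C(OnePoint ℕ, X)) N‖ := by
        rw [hL]; rfl
    _ ≤ ‖L.symm x‖ := ContinuousMap.norm_coe_le_norm _ _
    _ ≤ _ := (L.symm : X →L[ℝ] partialSumSpace e).le_opNorm x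

theorem exists_norm_coeff_le [CompleteSpace X] (he : IsSchauderBasis e) (n : ℕ) :
    ∃ C, ∀ x, ‖he.coeff x n‖ ≤ C * ‖x‖ := by
  obtain ⟨C, hC⟩ := he.exists_norm_partialSum_le
  refine ⟨2 * C / ‖e n‖, fun x => ?_⟩
  rw [div_mul_eq_mul_div, le_div_iff₀ (norm_pos_iff.2 (he.ne_zero n)), ← norm_smul]
  set p := fun N => ∑ k ∈ Finset.range N, he.coeff x k • e k
  calc ‖he.coeff x n • e n‖ = ‖p (n + 1) - p n‖ := by simp [p, Finset.sum_range_succ]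
    _ ≤ C * ‖x‖ + C * ‖x‖ := (norm_sub_le _ _).trans (add_le_add (hC x _) (hC x _))
    _ = 2 * C * ‖x‖ := by ring

/-- In a Banach space the coordinate functionals of `e` are continuous (open mapping theorem),
so `e` is a Schauder basis in the sense of Mathlib. -/
noncomputable def toSchauderBasis [CompleteSpace X] (he : IsSchauderBasis e) :
    SchauderBasis ℝ X where
  basis := e
  coord n :=
    ((LinearMap.proj n).comp he.coeff).mkContinuousOfExistsBound (he.exists_norm_coeff_le n)
  ortho i j := by
    simp [LinearMap.mkContinuousOfExistsBound, he.coeff_basis, Pi.single_apply]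
  expansion x := by
    rw [HasSum, SummationFilter.conditional_filter_eq_map_range, tendsto_map'_iff]
    exact he.tendsto_coeff x

end IsSchauderBasis

theorem exists_separated_seq_of_not_totallyBounded {E : Type*} [PseudoMetricSpace E] {s : Set E}
    (hs : ¬ TotallyBounded s) :
    ∃ ε > 0, ∃ p : ℕ → E, (∀ k, p k ∈ s) ∧ Pairwise fun k l => ε ≤ dist (p k) (p l) := by
  obtain ⟨ε, hε, hcover⟩ : ∃ ε > 0, ∀ t : Set E, t.Finite → ¬ s ⊆ ⋃ y ∈ t, Metric.ball y ε := by
    simpa [Metric.totallyBounded_iff] using hs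
  have hfar (t : Set E) (ht : t.Finite) : ∃ c, c ∈ s ∧ ∀ y ∈ t, ε ≤ dist c y := by
    obtain ⟨c, hcs, hc⟩ := Set.not_subset.1 (hcover t ht)
    exact ⟨c, hcs, fun y hy => not_lt.1 fun h => hc (Set.mem_biUnion hy h)⟩
  obtain ⟨p, hp⟩ := Set.seq_of_forall_finite_exists hfar
  refine ⟨ε, hε, p, fun k => (hp k).1, fun k l hkl => ?_⟩
  rcases hkl.lt_or_gt with h | h
  · rw [dist_comm]; exact (hp l).2 _ ⟨k, h, rfl⟩
  · exact (hp k).2 _ ⟨l, h, rfl⟩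

theorem exists_separated_image_of_not_compactOp {X Y : Type*} [NormedAddCommGroup X]
    [NormedSpace ℝ X] [CompleteSpace X] [NormedAddCommGroup Y] [NormedSpace ℝ Y]
    {T : Y →L[ℝ] X} (hT : ¬ CompactOp T) :
    ∃ ε > 0, ∃ v : ℕ → Y, (∀ k, ‖v k‖ ≤ 1) ∧ Pairwise fun k l => ε ≤ ‖T (v k) - T (v l)‖ := by
  have hT' : ¬ TotallyBounded (T '' Metric.closedBall 0 1) := fun h =>
    hT (h.closure.isCompact_of_isClosed isClosed_closure)
  obtain ⟨ε, hε, p, hp, hsep⟩ := exists_separated_seq_of_not_totallyBounded hT'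
  choose v hv hTv using hp
  refine ⟨ε, hε, v, fun k => by simpa using hv k, fun k l hkl => ?_⟩
  simpa [hTv, dist_eq_norm] using hsep hkl

theorem exists_lt_norm_sub_lt_of_mem_finiteDimensional {X : Type*} [NormedAddCommGroup X]
    [NormedSpace ℝ X] {V : Submodule ℝ X} [FiniteDimensional ℝ V] {y : ℕ → X} (hy : ∀ k, y k ∈ V)
    {R : ℝ} (hR : ∀ k, ‖y k‖ ≤ R) {δ : ℝ} (hδ : 0 < δ) : ∃ k l, k < l ∧ ‖y k - y l‖ < δ := by
  obtain ⟨a, -, φ, hφ, hlim⟩ := tendsto_subseq_of_bounded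
    (Metric.isBounded_closedBall (x := 0) (r := R)) (x := fun k => (⟨y k, hy k⟩ : V))
    fun k => by simpa using hR k
  obtain ⟨K, hK⟩ := Metric.cauchySeq_iff.1 hlim.cauchySeq δ hδ
  refine ⟨φ K, φ (K + 1), hφ K.lt_succ_self, ?_⟩
  simpa [dist_eq_norm] using hK K le_rfl (K + 1) K.le_succ

theorem exists_strictMono_chain {α : Type*} {R : ℕ → ℕ → ℕ → α → Prop}
    (h : ∀ j n, ∃ m, n < m ∧ ∃ a, R j n m a) :
    ∃ (N : ℕ → ℕ) (a : ℕ → α), StrictMono N ∧ ∀ j, R j (N j) (N (j + 1)) (a j) := by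
  choose m hm a ha using h
  let N : ℕ → ℕ := fun j => Nat.rec 0 m j
  exact ⟨N, fun j => a j (N j), strictMono_nat_of_lt_succ fun j => hm j (N j), fun j => ha j (N j)⟩

theorem isBlockBasic_Ico {X : Type*} [NormedAddCommGroup X] [NormedSpace ℝ X] (e : ℕ → X)
    {N : ℕ → ℕ} (hN : StrictMono N) (c : ℕ → ℕ → ℝ) :
    IsBlockBasic e fun j => ∑ n ∈ Finset.Ico (N j) (N (j + 1)), c j n • e n := by
  have hblock {i j n : ℕ} (hi : n ∈ Finset.Ico (N i) (N (i + 1)))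
      (hj : n ∈ Finset.Ico (N j) (N (j + 1))) : i = j := by
    rw [Finset.mem_Ico] at hi hj
    by_contra hij
    rcases Nat.lt_or_gt_of_ne hij with h | h
    · have := hN.monotone (show i + 1 ≤ j from h); omega
    · have := hN.monotone (show j + 1 ≤ i from h); omega
  classical
  refine ⟨fun j => Finset.Ico (N j) (N (j + 1)),
    fun n => if h : ∃ j, n ∈ Finset.Ico (N j) (N (j + 1)) then c h.choose n else 0,
    fun j => Finset.nonempty_Ico.2 (hN j.lt_succ_self), fun j m hm k hk => ?_,
    fun j => Finset.sum_congr rfl fun n hn => ?_⟩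
  · exact (Finset.mem_Ico.1 hm).2.trans_le (Finset.mem_Ico.1 hk).1
  · have h : ∃ j, n ∈ Finset.Ico (N j) (N (j + 1)) := ⟨j, hn⟩
    dsimp only
    rw [dif_pos h, hblock h.choose_spec hn]

theorem seqEquiv_of_sum_norm_sub_le {X : Type*} [NormedAddCommGroup X] [NormedSpace ℝ X]
    {u x : ℕ → X} {K : ℝ}
    (hK : ∀ (a : ℕ → ℝ) (s : Finset ℕ), ∀ j ∈ s, |a j| ≤ K * ‖∑ i ∈ s, a i • u i‖)
    (hux : ∀ s : Finset ℕ, ∑ j ∈ s, ‖x j - u j‖ ≤ (2 * K)⁻¹) : SeqEquiv u x := by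
  have hK0 : 0 ≤ K := by simpa using hux ∅
  refine ⟨2, one_le_two, fun a s => ?_⟩
  set S := ∑ j ∈ s, a j • u j
  have hdiff : ‖∑ j ∈ s, a j • x j - S‖ ≤ ‖S‖ / 2 :=
    calc ‖∑ j ∈ s, a j • x j - S‖ = ‖∑ j ∈ s, a j • (x j - u j)‖ := by
          simp only [S, smul_sub, Finset.sum_sub_distrib]
      _ ≤ ∑ j ∈ s, |a j| * ‖x j - u j‖ := by
          simpa only [norm_smul, Real.norm_eq_abs] using norm_sum_le s fun j => a j • (x j - u j)
      _ ≤ ∑ j ∈ s, K * ‖S‖ * ‖x j - u j‖ :=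
          Finset.sum_le_sum fun j hj => by gcongr; exact hK a s j hj
      _ ≤ K * ‖S‖ * (2 * K)⁻¹ := by
          rw [← Finset.mul_sum]; gcongr; exact hux s
      _ = ‖S‖ * (K * K⁻¹) / 2 := by ring
      _ ≤ ‖S‖ * 1 / 2 := by gcongr; exact mul_inv_le_one
      _ = ‖S‖ / 2 := by ring
  have h₁ := norm_sub_norm_le (∑ j ∈ s, a j • x j) S
  have h₂ := norm_sub_norm_le S (∑ j ∈ s, a j • x j)
  rw [norm_sub_rev] at h₂
  constructor <;> linarith

namespace SchauderBasis

variable {X : Type*} [NormedAddCommGroup X] [NormedSpace ℝ X] (b : SchauderBasis ℝ X)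
  {N : ℕ → ℕ}

theorem proj_comp_comp_apply (hN : Monotone N) (n m : ℕ) (x : X) :
    (b.proj ∘ N) n ((b.proj ∘ N) m x) = (b.proj ∘ N) (min n m) x := by
  simp only [Function.comp_apply, b.proj_comp, hN.map_min]

theorem succSub_proj_apply (hN : Monotone N) (j : ℕ) (x : X) :
    succSub (b.proj ∘ N) j x = ∑ n ∈ Finset.Ico (N j) (N (j + 1)), b.coord n x • b n := by
  simp [succSub, Finset.sum_Ico_eq_sub _ (hN j.le_succ)]

theorem succSub_proj_sum (hN : Monotone N) (a : ℕ → ℝ) (x : ℕ → X) {s : Finset ℕ} {j : ℕ}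
    (hj : j ∈ s) :
    succSub (b.proj ∘ N) j (∑ i ∈ s, a i • succSub (b.proj ∘ N) i (x i)) =
      a j • succSub (b.proj ∘ N) j (x j) := by
  simp [succSub_ortho (b.proj_comp_comp_apply hN), hj]

theorem norm_succSub_proj_le {C : ℝ} (hC : ∀ n, ‖b.proj n‖ ≤ C) (j : ℕ) :
    ‖succSub (b.proj ∘ N) j‖ ≤ 2 * C :=
  (norm_sub_le _ _).trans (by simp only [Function.comp_apply]; linarith [hC (N (j + 1)), hC (N j)])

theorem abs_mul_norm_succSub_proj_le {C : ℝ} (hC : ∀ n, ‖b.proj n‖ ≤ C) (hN : Monotone N)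
    (a : ℕ → ℝ) (x : ℕ → X) {s : Finset ℕ} {j : ℕ} (hj : j ∈ s) :
    |a j| * ‖succSub (b.proj ∘ N) j (x j)‖ ≤
      2 * C * ‖∑ i ∈ s, a i • succSub (b.proj ∘ N) i (x i)‖ := by
  rw [← Real.norm_eq_abs, ← norm_smul, ← b.succSub_proj_sum hN a x hj]
  exact (ContinuousLinearMap.le_opNorm _ _).trans
    (mul_le_mul_of_nonneg_right (b.norm_succSub_proj_le hC j) (norm_nonneg _))

theorem seqEquiv_succSub_proj {C c : ℝ} (hC : ∀ n, ‖b.proj n‖ ≤ C) (hN : Monotone N)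
    {x : ℕ → X} (hc : 0 < c) (hlow : ∀ j, c ≤ ‖succSub (b.proj ∘ N) j (x j)‖)
    (hsum : ∀ s : Finset ℕ, ∑ j ∈ s, ‖x j - succSub (b.proj ∘ N) j (x j)‖ ≤ c / (4 * C)) :
    SeqEquiv (fun j => succSub (b.proj ∘ N) j (x j)) x := by
  refine seqEquiv_of_sum_norm_sub_le (K := 2 * C / c) (fun a s j hj => ?_)
    fun s => (hsum s).trans_eq (by field_simp; ring)
  rw [div_mul_eq_mul_div, le_div_iff₀ hc]
  calc |a j| * c ≤ |a j| * ‖succSub (b.proj ∘ N) j (x j)‖ := by gcongr; exact hlow j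
    _ ≤ _ := b.abs_mul_norm_succSub_proj_le hC hN a x hj

variable {Y : Type*} [NormedAddCommGroup Y] [NormedSpace ℝ Y]

theorem exists_succSub_proj_near_image {T : Y →L[ℝ] X} {ε : ℝ} {v : ℕ → Y}
    (hv : ∀ k, ‖v k‖ ≤ 1) (hsep : Pairwise fun k l => ε ≤ ‖T (v k) - T (v l)‖) (N : ℕ) {δ : ℝ}
    (hδ : 0 < δ) :
    ∃ N', N < N' ∧ ∃ w, ‖w‖ ≤ 2 ∧ ε ≤ ‖T w‖ ∧ ‖(b.proj N' - b.proj N) (T w) - T w‖ < δ := by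
  have : FiniteDimensional ℝ (b.proj N).toLinearMap.range := by
    rw [b.range_proj_eq_span]; exact FiniteDimensional.span_of_finite ℝ (Set.toFinite _)
  obtain ⟨k, l, hkl, hclose⟩ := exists_lt_norm_sub_lt_of_mem_finiteDimensional
    (V := (b.proj N).toLinearMap.range) (y := fun k => b.proj N (T (v k)))
    (fun k => LinearMap.mem_range_self _ _)
    (fun k => ((b.proj N).comp T).le_opNorm_of_le (hv k)) (half_pos hδ)
  set w := v k - v l
  obtain ⟨N', hNN', htail⟩ := ((eventually_gt_atTop N).and
    ((b.tendsto_proj (T w)).eventually (Metric.ball_mem_nhds _ (half_pos hδ)))).exists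
  refine ⟨N', hNN', w, (norm_sub_le _ _).trans (by linarith [hv k, hv l]),
    by simpa [w] using hsep hkl.ne, ?_⟩
  calc ‖(b.proj N' - b.proj N) (T w) - T w‖ = ‖(b.proj N' (T w) - T w) - b.proj N (T w)‖ := by
        rw [sub_apply, sub_right_comm]
    _ ≤ ‖b.proj N' (T w) - T w‖ + ‖b.proj N (T w)‖ := norm_sub_le _ _
    _ < δ / 2 + δ / 2 := add_lt_add (by simpa [dist_eq_norm] using htail)
        (by simpa only [w, map_sub] using hclose)
    _ = δ := add_halves δ

theorem exists_isBlockBasic_seqEquiv_of_not_compactOp [CompleteSpace X] {T : Y →L[ℝ] X}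
    (hT : ¬ CompactOp T) :
    ∃ (u : ℕ → X) (v : ℕ → Y), IsBlockBasic b u ∧ SemiNormalized u ∧ SemiNormalized v ∧
      SeqEquiv u fun j => T (v j) := by
  obtain ⟨C, hC1, hC⟩ : ∃ C, 1 ≤ C ∧ ∀ n, ‖b.proj n‖ ≤ C :=
    let ⟨C, hC⟩ := b.exists_norm_proj_le
    ⟨max C 1, le_max_right _ _, fun n => (hC n).trans (le_max_left _ _)⟩
  obtain ⟨ε, hε, v, hv, hsep⟩ := exists_separated_image_of_not_compactOp hT
  set δ : ℕ → ℝ := fun j => ε / (16 * C) * (1 / 2) ^ j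
  have hδ_sum (s : Finset ℕ) : ∑ j ∈ s, δ j ≤ ε / 2 / (4 * C) :=
    calc ∑ j ∈ s, δ j = ε / (16 * C) * ∑ j ∈ s, (1 / 2 : ℝ) ^ j := (Finset.mul_sum ..).symm
      _ ≤ ε / (16 * C) * 2 := by
        gcongr
        exact (summable_geometric_two.sum_le_tsum s fun _ _ => by positivity).trans_eq
          tsum_geometric_two
      _ = ε / 2 / (4 * C) := by ring
  obtain ⟨N, w, hN, hw⟩ := exists_strictMono_chain fun j n =>
    b.exists_succSub_proj_near_image hv hsep n (δ := δ j) (by positivity)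
  set u := fun j => succSub (b.proj ∘ N) j (T (w j))
  have hux (j : ℕ) : ‖T (w j) - u j‖ ≤ δ j := by
    rw [norm_sub_rev]; exact (hw j).2.2.le
  have hu_low (j : ℕ) : ε / 2 ≤ ‖u j‖ := by
    have hδ : δ j ≤ ε / 2 := by
      have : ε / 2 / (4 * C) ≤ ε / 2 := div_le_self (by positivity) (by linarith)
      simpa using (hδ_sum {j}).trans this
    linarith [norm_sub_norm_le (T (w j)) (u j), (hw j).2.1, hux j]
  refine ⟨u, w, ?_, ⟨ε / 2, 2 * C * (‖T‖ * 2), half_pos hε, fun j => ⟨hu_low j, ?_⟩⟩,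
    ⟨ε / (‖T‖ + 1), 2, by positivity, fun j => ⟨?_, (hw j).1⟩⟩,
    b.seqEquiv_succSub_proj hC hN.monotone (half_pos hε) hu_low fun s =>
      (Finset.sum_le_sum fun j _ => hux j).trans (hδ_sum s)⟩
  · simpa only [u, b.succSub_proj_apply hN.monotone] using
      isBlockBasic_Ico b hN fun j n => b.coord n (T (w j))
  · exact ((succSub (b.proj ∘ N) j).le_opNorm _).trans <| mul_le_mul
      (b.norm_succSub_proj_le hC j) (T.le_opNorm_of_le (hw j).1) (norm_nonneg _) (by linarith)
  · rw [div_le_iff₀ (by positivity)]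
    nlinarith [(hw j).2.1, T.le_opNorm (w j), norm_nonneg (w j)]

end SchauderBasis

theorem statement0_general {X Y : Type*} [NormedAddCommGroup X] [NormedSpace ℝ X] [CompleteSpace X]
    [NormedAddCommGroup Y] [NormedSpace ℝ Y]
    (T : Y →L[ℝ] X) (hT : ¬ CompactOp T) (e : ℕ → X) (he : IsSchauderBasis e) :
    ∃ (u : ℕ → X) (v : ℕ → Y), IsBlockBasic e u ∧ SemiNormalized u ∧
      SemiNormalized v ∧ SeqEquiv u (fun j => T (v j)) :=
  he.toSchauderBasis.exists_isBlockBasic_seqEquiv_of_not_compactOp hT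

theorem statement0 {X Y : Type*} [NormedAddCommGroup X] [NormedSpace ℝ X] [CompleteSpace X]
    [NormedAddCommGroup Y] [NormedSpace ℝ Y] [CompleteSpace Y]
    (T : Y →L[ℝ] X) (hT : ¬ CompactOp T) (e : ℕ → X) (he : IsSchauderBasis e) :
    ∃ (u : ℕ → X) (v : ℕ → Y), IsBlockBasic e u ∧ SemiNormalized u ∧
      SemiNormalized v ∧ SeqEquiv u (fun j => T (v j)) :=
  statement0_general T hT e he
end

section
/- Let 1 ≤ q < ∞. Let X be a real Banach space with an unconditional basis (e_n)_{n∈ℕ} satisfying a lower q-estimate, let Y be a real Banach space with an unconditional basis (y_n)_{n∈ℕ} satisfying an upper q-estimate, and let T : Y → X be a bounded linear operator that is not compact. Then there exist a sequence (v_j)_{j∈ℕ} in Y disjointly finitely supported with respect to (y_n) and a sequence (u_j)_{j∈ℕ} in X disjointly finitely supported with respect to (e_n) such that (u_j), (v_j) and (T v_j) are each equivalent to the canonical basis of ℓ_q. -/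
open scoped BigOperators

/-!
Since `T` is not compact, the image of the unit ball contains an `ε`-separated sequence `T xₙ`.
The coordinate functionals of an unconditional basis of a Banach space are bounded (the open
mapping theorem, applied to the Banach space of partial-sum families of expansions), so along a
subsequence all coordinates of `xₙ` and of `T xₙ` converge. Consecutive differences `ζⱼ` are then
bounded, satisfy `ε ≤ ‖T ζⱼ‖`, and tend to zero coordinatewise in both bases. A gliding hump
produces disjoint blocks `Aⱼ` on which the projections `vⱼ` of `ζ_{mⱼ}` and `uⱼ` of `T ζ_{mⱼ}`
approximate them with summable errors. The upper `q`-estimate bounds `‖∑ aⱼ vⱼ‖` above and the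
lower `q`-estimate bounds `‖∑ aⱼ uⱼ‖` below by the `ℓ_q` norm of `a`; since `T vⱼ` is a small
perturbation of `uⱼ`, both bounds transfer to all three sequences.
-/

open Filter Topology Function
open scoped ENNReal

lemma Summable.exists_norm_sum_le {ι E : Type*} [SeminormedAddCommGroup E] {f : ι → E}
    (hf : Summable f) : ∃ M, ∀ F : Finset ι, ‖∑ n ∈ F, f n‖ ≤ M := by
  classical
  obtain ⟨s, hs⟩ := hf.vanishing (Metric.ball_mem_nhds (0 : E) one_pos)
  refine ⟨∑ n ∈ s, ‖f n‖ + 1, fun F => ?_⟩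
  rw [← Finset.sum_filter_add_sum_filter_not F (· ∈ s)]
  refine (norm_add_le _ _).trans (add_le_add ?_ ?_)
  · exact (norm_sum_le _ _).trans (Finset.sum_le_sum_of_subset_of_nonneg
      (fun n hn => (Finset.mem_filter.1 hn).2) fun _ _ _ => norm_nonneg _)
  · have hdisj : Disjoint (F.filter (· ∉ s)) s :=
      Finset.disjoint_left.2 fun _ hn hns => (Finset.mem_filter.1 hn).2 hns
    have := hs _ hdisj
    rw [Metric.mem_ball, dist_zero_right] at this
    exact this.le

namespace IsUncondBasis

variable {X : Type*} [NormedAddCommGroup X] [NormedSpace ℝ X] {e : ℕ → X}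
  (he : IsUncondBasis e)
include he

noncomputable def coeff (x : X) : ℕ → ℝ := (he.2 x).exists.choose

lemma hasSum_coeff (x : X) : HasSum (fun n => he.coeff x n • e n) x :=
  (he.2 x).exists.choose_spec

lemma coeff_eq_of_hasSum {x : X} {a : ℕ → ℝ} (h : HasSum (fun n => a n • e n) x) :
    he.coeff x = a :=
  (he.2 x).unique (he.hasSum_coeff x) h

noncomputable def coeffLinearMap (k : ℕ) : X →ₗ[ℝ] ℝ where
  toFun x := he.coeff x k
  map_add' x y := by
    have h := (he.hasSum_coeff x).add (he.hasSum_coeff y)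
    simp only [← add_smul] at h
    exact congrFun (he.coeff_eq_of_hasSum h) k
  map_smul' c x := by
    have h := (he.hasSum_coeff x).const_smul c
    simp only [smul_smul] at h
    exact congrFun (he.coeff_eq_of_hasSum h) k

lemma coeff_basis (j : ℕ) : he.coeff (e j) = Pi.single j 1 := by
  refine he.coeff_eq_of_hasSum ?_
  simpa using hasSum_single (f := fun n => (Pi.single j 1 : ℕ → ℝ) n • e n) j
    fun n hn => by simp [hn]

end IsUncondBasis

section ExpansionSpace

variable {X : Type*} [NormedAddCommGroup X] [NormedSpace ℝ X] {e : ℕ → X}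

local notation "ℓ∞" => lp (fun _ : Finset ℕ => X) ∞

variable (e) in
/-- Families `F ↦ ∑ n ∈ F, a n • e n` of finite partial sums of unconditionally convergent
expansions. With the supremum norm of `ℓ∞` this is the Banach space on which the open mapping
theorem bounds the coefficient functionals. -/
def expansionSpace : Submodule ℝ ℓ∞ where
  carrier := {g | (∀ F, g F = ∑ n ∈ F, g {n}) ∧ (∀ n, g {n} ∈ Submodule.span ℝ {e n}) ∧
    Summable fun n => g {n}}
  zero_mem' := by simp [summable_zero]
  add_mem' := by
    rintro g h ⟨hg, hge, hgs⟩ ⟨hh, hhe, hhs⟩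
    refine ⟨fun F => ?_, fun n => ?_, ?_⟩
    · simp [hg F, hh F, Finset.sum_add_distrib]
    · simpa using add_mem (hge n) (hhe n)
    · simpa using hgs.add hhs
  smul_mem' := by
    rintro c g ⟨hg, hge, hgs⟩
    refine ⟨fun F => ?_, fun n => ?_, ?_⟩
    · simp [hg F, Finset.smul_sum]
    · simpa using Submodule.smul_mem _ c (hge n)
    · simpa using hgs.const_smul c

lemma isClosed_expansionSpace [CompleteSpace X] : IsClosed (expansionSpace e : Set ℓ∞) := by
  have hev : ∀ F, Continuous fun g : ℓ∞ => g F :=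
    fun F => (lp.evalCLM ℝ (fun _ : Finset ℕ => X) ∞ F).continuous
  let S : Set ℓ∞ := {g | (∀ F, g F = ∑ n ∈ F, g {n}) ∧ ∀ n, g {n} ∈ Submodule.span ℝ {e n}}
  have hS : IsClosed S := by
    simp only [S, Set.ofPred_and, Set.ofPred_forall]
    exact (isClosed_iInter fun F =>
        isClosed_eq (hev F) (continuous_finsetSum _ fun n _ => hev {n})).inter
      (isClosed_iInter fun n => (Submodule.closed_of_finiteDimensional _).preimage (hev {n}))
  refine isClosed_of_closure_subset fun g hg => ?_
  have hsub : (expansionSpace e : Set ℓ∞) ⊆ S := fun h hh => ⟨hh.1, hh.2.1⟩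
  obtain ⟨hadd, hspan⟩ := hS.closure_subset (closure_mono hsub hg)
  refine ⟨hadd, hspan, summable_iff_vanishing_norm.2 fun ε hε => ?_⟩
  obtain ⟨h, ⟨hhadd, -, hhs⟩, hgh⟩ := Metric.mem_closure_iff.1 hg (ε / 2) (half_pos hε)
  obtain ⟨s, hs⟩ := summable_iff_vanishing_norm.1 hhs (ε / 2) (half_pos hε)
  refine ⟨s, fun t ht => ?_⟩
  have hgt : ‖g t - h t‖ < ε / 2 := by
    rw [dist_eq_norm] at hgh
    simpa using (lp.norm_apply_le_norm (by simp) (g - h) t).trans_lt hgh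
  have := hs t ht
  rw [← hadd t, ← hhadd t] at *
  linarith [norm_le_norm_add_norm_sub' (g t) (h t)]

variable (e) in
noncomputable def expansionSum : expansionSpace e →L[ℝ] X :=
  LinearMap.mkContinuous
    { toFun := fun g => ∑' n, (g : ℓ∞) {n}
      map_add' := fun g h => by simpa using g.2.2.2.tsum_add h.2.2.2
      map_smul' := fun c g => by simpa using tsum_const_smul'' (f := fun n => (g : ℓ∞) {n}) c }
    1 fun g => by
      rw [one_mul]
      refine le_of_tendsto' g.2.2.2.hasSum.norm fun F => ?_
      rw [← g.2.1 F]
      exact lp.norm_apply_le_norm (by simp) _ F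

lemma hasSum_expansionSum (g : expansionSpace e) :
    HasSum (fun n => (g : ℓ∞) {n}) (expansionSum e g) :=
  g.2.2.2.hasSum

lemma expansionSum_surjective (he : IsUncondBasis e) : Surjective (expansionSum e) := by
  intro x
  obtain ⟨M, hM⟩ := (he.hasSum_coeff x).summable.exists_norm_sum_le
  let g : ℓ∞ := ⟨fun F => ∑ n ∈ F, he.coeff x n • e n,
    memℓp_infty ⟨M, by rintro _ ⟨F, rfl⟩; exact hM F⟩⟩
  have hg : g ∈ expansionSpace e := by
    refine ⟨fun F => ?_, fun n => ?_, ?_⟩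
    · simp [g]
    · simpa [g] using Submodule.smul_mem _ _ (Submodule.mem_span_singleton_self (e n))
    · simpa [g] using (he.hasSum_coeff x).summable
  exact ⟨⟨g, hg⟩, by simpa [expansionSum, g] using (he.hasSum_coeff x).tsum_eq⟩

theorem IsUncondBasis.exists_norm_coeff_smul_le [CompleteSpace X] (he : IsUncondBasis e) :
    ∃ C, ∀ x k, ‖he.coeff x k • e k‖ ≤ C * ‖x‖ := by
  have := (isClosed_expansionSpace (e := e)).completeSpace_coe
  obtain ⟨C, -, hC⟩ := (expansionSum e).exists_preimage_norm_le (expansionSum_surjective he)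
  refine ⟨C, fun x k => ?_⟩
  obtain ⟨g, rfl, hgC⟩ := hC x
  choose a ha using fun n => Submodule.mem_span_singleton.1 (g.2.2.1 n)
  have hcoeff : he.coeff (expansionSum e g) = a :=
    he.coeff_eq_of_hasSum (by simpa [ha] using hasSum_expansionSum g)
  calc ‖he.coeff (expansionSum e g) k • e k‖ = ‖(g : ℓ∞) {k}‖ := by rw [hcoeff, ha]
    _ ≤ ‖g‖ := lp.norm_apply_le_norm (by simp) _ _
    _ ≤ C * ‖expansionSum e g‖ := hgC

end ExpansionSpace

namespace IsUncondBasis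

variable {X : Type*} [NormedAddCommGroup X] [NormedSpace ℝ X] [CompleteSpace X] {e : ℕ → X}
  (he : IsUncondBasis e)

noncomputable def toUnconditionalSchauderBasis : UnconditionalSchauderBasis ℕ ℝ X where
  basis := e
  coord k := (he.coeffLinearMap k).mkContinuousOfExistsBound <| by
    obtain ⟨C, hC⟩ := he.exists_norm_coeff_smul_le
    refine ⟨C / ‖e k‖, fun x => ?_⟩
    rw [div_mul_eq_mul_div, le_div_iff₀ (norm_pos_iff.2 (he.1 k)), ← norm_smul]
    exact hC x k
  ortho i j := by convert congrFun (he.coeff_basis j) i <;> rfl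
  expansion := he.hasSum_coeff

@[simp]
lemma coe_toUnconditionalSchauderBasis : ⇑he.toUnconditionalSchauderBasis = e :=
  rfl

end IsUncondBasis

namespace GeneralSchauderBasis

variable {X : Type*} [NormedAddCommGroup X] [NormedSpace ℝ X]

lemma proj_mem_span {β : Type*} {L : SummationFilter β} (b : GeneralSchauderBasis β ℝ X L)
    (A : Finset β) (x : X) : b.proj A x ∈ Submodule.span ℝ (b '' A) := by
  rw [← b.range_proj_eq_span]
  exact LinearMap.mem_range_self _ x

variable (b : UnconditionalSchauderBasis ℕ ℝ X)

lemma tendsto_proj_range (x : X) :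
    Tendsto (fun N => b.proj (Finset.range N) x) atTop (𝓝 x) :=
  (b.tendsto_proj x).comp tendsto_finset_range

lemma tendsto_proj_zero_of_tendsto_coord {z : ℕ → X}
    (hz : ∀ k, Tendsto (fun j => b.coord k (z j)) atTop (𝓝 0)) (A : Finset ℕ) :
    Tendsto (fun j => b.proj A (z j)) atTop (𝓝 0) := by
  simpa using tendsto_finsetSum A fun k _ => (hz k).smul_const (b k)

lemma norm_sub_proj_Ico_le {M N : ℕ} (h : M ≤ N) (x : X) :
    ‖x - b.proj (Finset.Ico M N) x‖ ≤
      ‖b.proj (Finset.range M) x‖ + ‖b.proj (Finset.range N) x - x‖ := by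
  have hsplit : b.proj (Finset.range N) x =
      b.proj (Finset.range M) x + b.proj (Finset.Ico M N) x := by
    simpa only [proj_apply] using (Finset.sum_range_add_sum_Ico _ h).symm
  calc ‖x - b.proj (Finset.Ico M N) x‖
      = ‖b.proj (Finset.range M) x - (b.proj (Finset.range N) x - x)‖ := by
        rw [hsplit]; congr 1; abel
    _ ≤ _ := norm_sub_le _ _

end GeneralSchauderBasis

open GeneralSchauderBasis in
theorem exists_pairwise_disjoint_proj_near {X Y : Type*} [NormedAddCommGroup X] [NormedSpace ℝ X]
    [NormedAddCommGroup Y] [NormedSpace ℝ Y]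
    (b : UnconditionalSchauderBasis ℕ ℝ X) (b' : UnconditionalSchauderBasis ℕ ℝ Y)
    {z : ℕ → X} {w : ℕ → Y} (hz : ∀ k, Tendsto (fun j => b.coord k (z j)) atTop (𝓝 0))
    (hw : ∀ k, Tendsto (fun j => b'.coord k (w j)) atTop (𝓝 0)) {τ : ℕ → ℝ}
    (hτ : ∀ j, 0 < τ j) :
    ∃ (m : ℕ → ℕ) (A : ℕ → Finset ℕ), Pairwise (Disjoint on A) ∧ ∀ j,
      ‖z (m j) - b.proj (A j) (z (m j))‖ < τ j ∧ ‖w (m j) - b'.proj (A j) (w (m j))‖ < τ j := by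
  have step : ∀ j M, ∃ n N, M ≤ N ∧ ‖z n - b.proj (Finset.Ico M N) (z n)‖ < τ j ∧
      ‖w n - b'.proj (Finset.Ico M N) (w n)‖ < τ j := by
    intro j M
    have hτ2 := half_pos (hτ j)
    have small : ∀ {f : ℕ → ℝ}, Tendsto f atTop (𝓝 0) → ∀ᶠ n in atTop, f n < τ j / 2 :=
      fun hf => hf.eventually (gt_mem_nhds hτ2)
    obtain ⟨n, hzn, hwn⟩ :=
      ((small (tendsto_zero_iff_norm_tendsto_zero.1
          (tendsto_proj_zero_of_tendsto_coord b hz (Finset.range M)))).and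
        (small (tendsto_zero_iff_norm_tendsto_zero.1
          (tendsto_proj_zero_of_tendsto_coord b' hw (Finset.range M))))).exists
    obtain ⟨N, hMN, hzN, hwN⟩ := ((eventually_ge_atTop M).and
      ((small (tendsto_iff_norm_sub_tendsto_zero.1 (tendsto_proj_range b (z n)))).and
        (small (tendsto_iff_norm_sub_tendsto_zero.1 (tendsto_proj_range b' (w n)))))).exists
    exact ⟨n, N, hMN, (norm_sub_proj_Ico_le b hMN _).trans_lt (by linarith),
      (norm_sub_proj_Ico_le b' hMN _).trans_lt (by linarith)⟩
  choose n N hMN hzN hwN using step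
  let G : ℕ → ℕ := fun j => Nat.rec 0 (fun j M => N j M) j
  have hG : Monotone G := monotone_nat_of_le_succ fun j => hMN j (G j)
  refine ⟨fun j => n j (G j), fun j => Finset.Ico (G j) (G (j + 1)), fun i j hij => ?_,
    fun j => ⟨hzN j (G j), hwN j (G j)⟩⟩
  rw [onFun, ← Finset.disjoint_coe, Finset.coe_Ico, Finset.coe_Ico]
  exact hG.pairwise_disjoint_on_Ico_succ hij

lemma exists_strictMono_tendsto_apply {ι E : Type*} [Countable ι] [NormedAddCommGroup E]
    [NormedSpace ℝ E] (f : ι → StrongDual ℝ E) {x : ℕ → E} {R : ℝ} (hx : ∀ n, ‖x n‖ ≤ R) :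
    ∃ φ : ℕ → ℕ, StrictMono φ ∧ ∀ k, ∃ L, Tendsto (fun n => f k (x (φ n))) atTop (𝓝 L) := by
  obtain ⟨L, -, φ, hφ, hL⟩ :=
    (isCompact_univ_pi fun k => isCompact_closedBall (0 : ℝ) (‖f k‖ * R)).tendsto_subseq
      (x := fun n k => f k (x n)) fun n k _ => by simpa using (f k).le_opNorm_of_le (hx n)
  exact ⟨φ, hφ, fun k => ⟨L k, tendsto_pi_nhds.1 hL k⟩⟩

section NotCompactOp

variable {X Y : Type*} [NormedAddCommGroup X] [NormedSpace ℝ X] [NormedAddCommGroup Y]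
  [NormedSpace ℝ Y] {T : Y →L[ℝ] X}

lemma norm_pos_of_not_compactOp (hT : ¬ CompactOp T) : 0 < ‖T‖ := by
  refine norm_pos_iff.2 fun h => hT ?_
  refine (isCompact_singleton (x := 0)).of_isClosed_subset isClosed_closure
    (closure_minimal ?_ isClosed_singleton)
  rintro _ ⟨x, -, rfl⟩
  simp [h]

lemma exists_separated_of_not_compactOp [CompleteSpace X] (hT : ¬ CompactOp T) :
    ∃ ε > 0, ∃ x : ℕ → Y, (∀ n, ‖x n‖ ≤ 1) ∧ ∀ m n, m < n → ε ≤ ‖T (x n) - T (x m)‖ := by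
  have hTB : ¬ TotallyBounded (T '' Metric.closedBall 0 1) :=
    fun h => hT (h.closure.isCompact_of_isClosed isClosed_closure)
  simp only [Metric.totallyBounded_iff, not_forall, not_exists, not_and] at hTB
  obtain ⟨ε, hε, hsep⟩ := hTB
  refine ⟨ε, hε, exists_seq_of_forall_finset_exists (‖·‖ ≤ 1) (fun a b => ε ≤ ‖T b - T a‖)
    fun s _ => ?_⟩
  obtain ⟨_, ⟨x, hx, rfl⟩, hxs⟩ := Set.not_subset.1 (hsep _ (s.finite_toSet.image T))
  refine ⟨x, mem_closedBall_zero_iff.1 hx, fun a ha => ?_⟩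
  by_contra! h
  exact hxs (Set.mem_biUnion (Set.mem_image_of_mem T ha) (by rwa [Metric.mem_ball, dist_eq_norm]))

theorem exists_tendsto_apply_zero_of_not_compactOp [CompleteSpace X] (hT : ¬ CompactOp T)
    (f : ℕ → StrongDual ℝ Y) (g : ℕ → StrongDual ℝ X) :
    ∃ ε > 0, ∃ ζ : ℕ → Y, (∀ j, ‖ζ j‖ ≤ 2) ∧ (∀ j, ε ≤ ‖T (ζ j)‖) ∧
      (∀ k, Tendsto (fun j => f k (ζ j)) atTop (𝓝 0)) ∧
      ∀ k, Tendsto (fun j => g k (T (ζ j))) atTop (𝓝 0) := by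
  obtain ⟨ε, hε, x, hx, hsep⟩ := exists_separated_of_not_compactOp hT
  obtain ⟨φ, hφ, hlim⟩ := exists_strictMono_tendsto_apply (Sum.elim f fun k => (g k).comp T) hx
  have hdiff : ∀ k, Tendsto (fun j => Sum.elim f (fun k => (g k).comp T) k
      (x (φ (j + 1)) - x (φ j))) atTop (𝓝 0) := fun k => by
    obtain ⟨L, hL⟩ := hlim k
    simpa using (hL.comp (tendsto_add_atTop_nat 1)).sub hL
  refine ⟨ε, hε, fun j => x (φ (j + 1)) - x (φ j), fun j => ?_, fun j => ?_,
    fun k => by simpa using hdiff (.inl k), fun k => by simpa using hdiff (.inr k)⟩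
  · linarith [norm_sub_le (x (φ (j + 1))) (x (φ j)), hx (φ (j + 1)), hx (φ j)]
  · simpa using hsep _ _ (hφ j.lt_succ_self)

end NotCompactOp

open GeneralSchauderBasis in
theorem exists_blocks_of_not_compactOp {X Y : Type*} [NormedAddCommGroup X] [NormedSpace ℝ X]
    [CompleteSpace X] [NormedAddCommGroup Y] [NormedSpace ℝ Y]
    (b : UnconditionalSchauderBasis ℕ ℝ Y) (b' : UnconditionalSchauderBasis ℕ ℝ X)
    {T : Y →L[ℝ] X} (hT : ¬ CompactOp T) :
    ∃ ε > 0, ∀ δ > 0, ∃ (A : ℕ → Finset ℕ) (v : ℕ → Y) (u : ℕ → X) (η : ℕ → ℝ),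
      Pairwise (Disjoint on A) ∧ (∀ j, v j ∈ Submodule.span ℝ (b '' A j)) ∧
      (∀ j, u j ∈ Submodule.span ℝ (b' '' A j)) ∧ (∀ j, ‖v j‖ ≤ 2 + δ) ∧
      (∀ j, ε - δ ≤ ‖u j‖) ∧ (∀ j, ‖T (v j) - u j‖ ≤ η j) ∧ Summable η ∧ ∑' j, η j = δ := by
  obtain ⟨ε, hε, ζ, hζ, hTζ, hζ0, hTζ0⟩ :=
    exists_tendsto_apply_zero_of_not_compactOp hT b.coord b'.coord
  refine ⟨ε, hε, fun δ hδ => ?_⟩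
  -- chosen so that the errors `(‖T‖ + 1) * τ j` of `T (v j) - u j` sum to `δ`
  set τ : ℕ → ℝ := fun j => δ / (‖T‖ + 1) / 2 / 2 ^ j
  have hτ : ∀ j, 0 < τ j := fun j => by positivity
  have hτδ : ∀ j, τ j ≤ δ := fun j => by
    calc τ j ≤ δ / (‖T‖ + 1) / 2 := div_le_self (by positivity) (one_le_pow₀ one_le_two)
      _ ≤ δ / (‖T‖ + 1) := div_le_self (by positivity) one_le_two
      _ ≤ δ := div_le_self hδ.le (by linarith [norm_nonneg T])
  obtain ⟨m, A, hA, hnear⟩ := exists_pairwise_disjoint_proj_near b b' hζ0 hTζ0 hτ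
  set v : ℕ → Y := fun j => b.proj (A j) (ζ (m j))
  set u : ℕ → X := fun j => b'.proj (A j) (T (ζ (m j)))
  have hv : ∀ j, ‖ζ (m j) - v j‖ < τ j := fun j => (hnear j).1
  have hu : ∀ j, ‖T (ζ (m j)) - u j‖ < τ j := fun j => (hnear j).2
  refine ⟨A, v, u, fun j => (‖T‖ + 1) * τ j, hA, fun j => proj_mem_span _ _ _,
    fun j => proj_mem_span _ _ _, fun j => ?_, fun j => ?_, fun j => ?_,
    (summable_geometric_two' _).mul_left _, ?_⟩
  · linarith [norm_le_norm_add_norm_sub (ζ (m j)) (v j), hζ (m j), hv j, hτδ j]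
  · linarith [norm_le_norm_add_norm_sub' (T (ζ (m j))) (u j), hTζ (m j), hu j, hτδ j]
  · calc ‖T (v j) - u j‖ = ‖(T (ζ (m j)) - u j) - T (ζ (m j) - v j)‖ := by
          rw [map_sub]; congr 1; abel
      _ ≤ ‖T (ζ (m j)) - u j‖ + ‖T‖ * ‖ζ (m j) - v j‖ :=
          (norm_sub_le _ _).trans (add_le_add_right (T.le_opNorm _) _)
      _ ≤ τ j + ‖T‖ * τ j := by gcongr; exacts [(hu j).le, (hv j).le]
      _ = (‖T‖ + 1) * τ j := by ring
  · rw [tsum_mul_left, tsum_geometric_two', mul_div_cancel₀ _ (by positivity)]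

section LqEstimates

noncomputable def lqNorm (q : ℝ) (s : Finset ℕ) (a : ℕ → ℝ) : ℝ := (∑ j ∈ s, |a j| ^ q) ^ (1 / q)

variable {q : ℝ} {s : Finset ℕ} {a b : ℕ → ℝ}

lemma lqNorm_nonneg : 0 ≤ lqNorm q s a := by
  unfold lqNorm
  positivity

lemma abs_le_lqNorm (hq : 0 < q) {j : ℕ} (hj : j ∈ s) : |a j| ≤ lqNorm q s a := by
  calc |a j| = (|a j| ^ q) ^ (1 / q) := by rw [one_div, Real.rpow_rpow_inv (abs_nonneg _) hq.ne']
    _ ≤ lqNorm q s a := Real.rpow_le_rpow (by positivity)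
      (Finset.single_le_sum (f := fun i => |a i| ^ q) (fun _ _ => by positivity) hj)
      (by positivity)

lemma lqNorm_le_lqNorm (hq : 0 < q) (h : ∀ j ∈ s, |a j| ≤ |b j|) : lqNorm q s a ≤ lqNorm q s b := by
  refine Real.rpow_le_rpow (by positivity) (Finset.sum_le_sum fun j hj => ?_) (by positivity)
  exact Real.rpow_le_rpow (abs_nonneg _) (h j hj) hq.le

lemma lqNorm_const_mul (hq : 0 < q) (c : ℝ) :
    lqNorm q s (fun j => c * a j) = |c| * lqNorm q s a := by
  simp only [lqNorm, abs_mul]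
  rw [Finset.sum_congr rfl fun j _ => Real.mul_rpow (abs_nonneg c) (abs_nonneg (a j)),
    ← Finset.mul_sum, Real.mul_rpow (by positivity) (by positivity), one_div,
    Real.rpow_rpow_inv (abs_nonneg c) hq.ne']

variable {E F : Type*} [NormedAddCommGroup E] [NormedSpace ℝ E] [NormedAddCommGroup F]
  [NormedSpace ℝ F]

def LqLowerBound (u : ℕ → E) (q c : ℝ) : Prop :=
  ∀ (a : ℕ → ℝ) (s : Finset ℕ), c * lqNorm q s a ≤ ‖∑ j ∈ s, a j • u j‖

def LqUpperBound (u : ℕ → E) (q C : ℝ) : Prop :=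
  ∀ (a : ℕ → ℝ) (s : Finset ℕ), ‖∑ j ∈ s, a j • u j‖ ≤ C * lqNorm q s a

lemma equivCanonLq_of_lqBounds {u : ℕ → E} {c C : ℝ} (hc : 0 < c) (hl : LqLowerBound u q c)
    (hu : LqUpperBound u q C) : EquivCanonLq u q := by
  refine ⟨max (max 1 C) c⁻¹, (le_max_left _ _).trans (le_max_left _ _), fun a s => ⟨?_, ?_⟩⟩
  · calc (max (max 1 C) c⁻¹)⁻¹ * lqNorm q s a ≤ c * lqNorm q s a :=
          mul_le_mul_of_nonneg_right (inv_le_of_inv_le₀ hc (le_max_right _ _)) lqNorm_nonneg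
      _ ≤ _ := hl a s
  · calc _ ≤ C * lqNorm q s a := hu a s
      _ ≤ _ := mul_le_mul_of_nonneg_right ((le_max_right _ _).trans (le_max_left _ _))
          lqNorm_nonneg

lemma sum_comp_equivFin_symm {M : Type*} [AddCommMonoid M] (s : Finset ℕ) (f : ℕ → M) :
    ∑ i, f (s.equivFin.symm i) = ∑ j ∈ s, f j :=
  (Equiv.sum_comp s.equivFin.symm fun j : s => f j).trans (Finset.sum_coe_sort s f)

lemma LowerEstimate.exists_lqLowerBound {e : ℕ → E} (hlow : LowerEstimate e q) (hq : 0 < q) :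
    ∃ C > 0, ∀ {A : ℕ → Finset ℕ} {u : ℕ → E} {c : ℝ}, Pairwise (Disjoint on A) →
      (∀ j, u j ∈ Submodule.span ℝ (e '' A j)) → 0 ≤ c → (∀ j, c ≤ ‖u j‖) →
      LqLowerBound u q (c / C) := by
  obtain ⟨C, hC, hest⟩ := hlow
  refine ⟨C, hC, fun {A u c} hA hu hc hcu a s => ?_⟩
  have h := hest s.card (fun i => a (s.equivFin.symm i) • u (s.equivFin.symm i))
    (fun i => A (s.equivFin.symm i))
    (hA.comp_of_injective (Subtype.val_injective.comp s.equivFin.symm.injective))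
    (fun i => Submodule.smul_mem _ _ (hu _))
  rw [sum_comp_equivFin_symm s fun j => ‖a j • u j‖ ^ q,
    sum_comp_equivFin_symm s fun j => a j • u j] at h
  replace h : lqNorm q s (fun j => ‖a j • u j‖) ≤ C * ‖∑ j ∈ s, a j • u j‖ := by
    simpa [lqNorm] using h
  rw [div_mul_eq_mul_div, div_le_iff₀' hC, ← abs_of_nonneg hc, ← lqNorm_const_mul hq]
  refine le_trans (lqNorm_le_lqNorm hq fun j _ => ?_) h
  rw [abs_mul, abs_of_nonneg hc, abs_norm, norm_smul, Real.norm_eq_abs, mul_comm]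
  exact mul_le_mul_of_nonneg_left (hcu j) (abs_nonneg _)

lemma UpperEstimate.exists_lqUpperBound {e : ℕ → E} (hup : UpperEstimate e q) (hq : 0 < q) :
    ∃ C > 0, ∀ {A : ℕ → Finset ℕ} {u : ℕ → E} {M : ℝ}, Pairwise (Disjoint on A) →
      (∀ j, u j ∈ Submodule.span ℝ (e '' A j)) → (∀ j, ‖u j‖ ≤ M) →
      LqUpperBound u q (C * M) := by
  obtain ⟨C, hC, hest⟩ := hup
  refine ⟨C, hC, fun {A u M} hA hu hMu a s => ?_⟩
  have hM : 0 ≤ M := (norm_nonneg _).trans (hMu 0)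
  have h := hest s.card (fun i => a (s.equivFin.symm i) • u (s.equivFin.symm i))
    (fun i => A (s.equivFin.symm i))
    (hA.comp_of_injective (Subtype.val_injective.comp s.equivFin.symm.injective))
    (fun i => Submodule.smul_mem _ _ (hu _))
  rw [sum_comp_equivFin_symm s fun j => ‖a j • u j‖ ^ q,
    sum_comp_equivFin_symm s fun j => a j • u j] at h
  replace h : ‖∑ j ∈ s, a j • u j‖ ≤ C * lqNorm q s (fun j => ‖a j • u j‖) := by
    simpa [lqNorm] using h
  rw [mul_assoc, ← abs_of_nonneg hM, ← lqNorm_const_mul hq]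
  refine h.trans (mul_le_mul_of_nonneg_left (lqNorm_le_lqNorm hq fun j _ => ?_) hC.le)
  rw [abs_mul, abs_of_nonneg hM, abs_norm, norm_smul, Real.norm_eq_abs, mul_comm]
  exact mul_le_mul_of_nonneg_right (hMu j) (abs_nonneg _)

lemma norm_sum_smul_sub_le (hq : 0 < q) {u w : ℕ → E} {η : ℕ → ℝ}
    (hη : ∀ j, ‖w j - u j‖ ≤ η j) (hs : Summable η) (a : ℕ → ℝ) (s : Finset ℕ) :
    ‖∑ j ∈ s, a j • w j - ∑ j ∈ s, a j • u j‖ ≤ (∑' j, η j) * lqNorm q s a := by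
  have hη0 : ∀ j, 0 ≤ η j := fun j => (norm_nonneg _).trans (hη j)
  rw [← Finset.sum_sub_distrib]
  calc ‖∑ j ∈ s, (a j • w j - a j • u j)‖ ≤ ∑ j ∈ s, |a j| * η j := by
        refine norm_sum_le_of_le _ fun j _ => ?_
        rw [← smul_sub, norm_smul, Real.norm_eq_abs]
        exact mul_le_mul_of_nonneg_left (hη j) (abs_nonneg _)
    _ ≤ ∑ j ∈ s, lqNorm q s a * η j :=
        Finset.sum_le_sum fun j hj => mul_le_mul_of_nonneg_right (abs_le_lqNorm hq hj) (hη0 j)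
    _ ≤ lqNorm q s a * ∑' j, η j := by
        rw [← Finset.mul_sum]
        exact mul_le_mul_of_nonneg_left (hs.sum_le_tsum s fun j _ => hη0 j) lqNorm_nonneg
    _ = _ := mul_comm _ _

lemma LqLowerBound.of_norm_sub_le (hq : 0 < q) {u w : ℕ → E} {c : ℝ} {η : ℕ → ℝ}
    (hu : LqLowerBound u q c) (hη : ∀ j, ‖w j - u j‖ ≤ η j) (hs : Summable η) :
    LqLowerBound w q (c - ∑' j, η j) := fun a s => by
  rw [sub_mul]
  linarith [hu a s, norm_sum_smul_sub_le hq hη hs a s,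
    norm_le_norm_add_norm_sub (∑ j ∈ s, a j • w j) (∑ j ∈ s, a j • u j)]

lemma LqUpperBound.of_norm_sub_le (hq : 0 < q) {u w : ℕ → E} {C : ℝ} {η : ℕ → ℝ}
    (hu : LqUpperBound u q C) (hη : ∀ j, ‖w j - u j‖ ≤ η j) (hs : Summable η) :
    LqUpperBound w q (C + ∑' j, η j) := fun a s => by
  rw [add_mul]
  linarith [hu a s, norm_sum_smul_sub_le hq hη hs a s,
    norm_le_norm_add_norm_sub' (∑ j ∈ s, a j • w j) (∑ j ∈ s, a j • u j)]

lemma LqUpperBound.map {u : ℕ → E} {C : ℝ} (hu : LqUpperBound u q C) (T : E →L[ℝ] F) :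
    LqUpperBound (fun j => T (u j)) q (‖T‖ * C) := fun a s => by
  simp_rw [← map_smul, ← map_sum, mul_assoc]
  exact T.le_opNorm_of_le (hu a s)

lemma LqLowerBound.of_map {u : ℕ → E} {c : ℝ} (T : E →L[ℝ] F)
    (hTu : LqLowerBound (fun j => T (u j)) q c) : LqLowerBound u q (c / ‖T‖) := fun a s => by
  rw [div_mul_eq_mul_div]
  refine div_le_of_le_mul₀ (norm_nonneg _) (norm_nonneg _) ?_
  calc c * lqNorm q s a ≤ ‖T (∑ j ∈ s, a j • u j)‖ := by
        simpa only [map_sum, map_smul] using hTu a s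
    _ ≤ _ := by rw [mul_comm]; exact T.le_opNorm _

end LqEstimates

theorem statement5 {X Y : Type*} [NormedAddCommGroup X] [NormedSpace ℝ X] [CompleteSpace X]
    [NormedAddCommGroup Y] [NormedSpace ℝ Y] [CompleteSpace Y]
    (q : ℝ) (hq : 1 ≤ q)
    (e : ℕ → X) (he : IsUncondBasis e) (hlow : LowerEstimate e q)
    (y : ℕ → Y) (hy : IsUncondBasis y) (hup : UpperEstimate y q)
    (T : Y →L[ℝ] X) (hT : ¬ CompactOp T) :
    ∃ (v : ℕ → Y) (u : ℕ → X), DisjSupported y v ∧ DisjSupported e u ∧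
      EquivCanonLq u q ∧ EquivCanonLq v q ∧ EquivCanonLq (fun j => T (v j)) q := by
  have hq0 : 0 < q := by linarith
  obtain ⟨CX, hCX, hlowX⟩ := hlow.exists_lqLowerBound hq0
  obtain ⟨CY, -, hupY⟩ := hup.exists_lqUpperBound hq0
  obtain ⟨ε, hε, hblocks⟩ := exists_blocks_of_not_compactOp hy.toUnconditionalSchauderBasis
    he.toUnconditionalSchauderBasis hT
  set δ := min (ε / 2) (ε / (4 * CX))
  obtain ⟨A, v, u, η, hA, hv, hu, hv_norm, hu_norm, hTvu, hη, hη_sum⟩ :=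
    hblocks δ (by positivity)
  simp only [IsUncondBasis.coe_toUnconditionalSchauderBasis] at hv hu
  have hv_up : LqUpperBound v q (CY * (2 + δ)) := hupY hA hv hv_norm
  have hu_low : LqLowerBound u q (ε / 2 / CX) := hlowX hA hu (by positivity)
    fun j => le_trans (by linarith [min_le_left (ε / 2) (ε / (4 * CX))]) (hu_norm j)
  have hTv_low := hu_low.of_norm_sub_le hq0 hTvu hη
  have hu_up := (hv_up.map T).of_norm_sub_le hq0 (fun j => (norm_sub_rev _ _).trans_le (hTvu j)) hη
  rw [hη_sum] at hTv_low hu_up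
  have hc : 0 < ε / 2 / CX - δ := by
    have : ε / (4 * CX) < ε / 2 / CX := by
      rw [div_div]; exact div_lt_div_of_pos_left hε (by positivity) (by linarith)
    linarith [min_le_right (ε / 2) (ε / (4 * CX))]
  exact ⟨v, u, ⟨A, hA, hv⟩, ⟨A, hA, hu⟩, equivCanonLq_of_lqBounds (by positivity) hu_low hu_up,
    equivCanonLq_of_lqBounds (div_pos hc (norm_pos_of_not_compactOp hT)) (hTv_low.of_map T) hv_up,
    equivCanonLq_of_lqBounds hc hTv_low (hv_up.map T)⟩
end
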